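/- Let M ≥ 3. Then the cross-correlation periodogram of the noisy periodic signal is an unbiased estimator of the signal's power spectrum: E[P_y(f)] − |X(f)|² = 0. -/

import Mathlib

/-!
Each window's noise coefficient `N_m` is a linear combination of the samples of block `m mod M`.
For `M ≥ 2` the blocks `m mod M` and `m + 1 mod M` are distinct, so the two noise coefficients in
`Y_m · conj Y_{m+1}` are built from disjoint sets of independent centred samples. Expanding
`(X + N_m) · conj (X + N_{m+1})`, every term except `X · conj X` then has expectation zero, so each
summand of `P_y(f)` already has mean `|X|²`.
-/

open MeasureTheory ProbabilityTheory Complex Finset ComplexConjugate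
open scoped NNReal

section GaussianMoments

variable {Ω : Type*} [MeasurableSpace Ω] {μ : Measure Ω} {ξ : Ω → ℝ} {m : ℝ} {v : ℝ≥0}

lemma hasLaw_of_map_eq {ν : Measure ℝ} [IsProbabilityMeasure ν] (h : μ.map ξ = ν) :
    HasLaw ξ ν μ :=
  ⟨.of_map_ne_zero (h ▸ IsProbabilityMeasure.ne_zero ν), h⟩

lemma integrable_of_map_eq_gaussianReal (h : μ.map ξ = gaussianReal m v) : Integrable ξ μ :=
  (integrable_map_measure aestronglyMeasurable_id
    (hasLaw_of_map_eq h).aemeasurable).mp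
    (h ▸ (memLp_id_gaussianReal 1).integrable le_rfl)

lemma integral_eq_of_map_eq_gaussianReal (h : μ.map ξ = gaussianReal m v) : μ[ξ] = m := by
  rw [(hasLaw_of_map_eq h).integral_eq, integral_id_gaussianReal]

end GaussianMoments

lemma mul_add_ne_mul_add_of_ne {L p q s t : ℕ} (hpq : p ≠ q) (hs : s < L) (ht : t < L) :
    p * L + s ≠ q * L + t := by
  rcases hpq.lt_or_gt with h | h
  · have : (p + 1) * L ≤ q * L := Nat.mul_le_mul_right L h
    nlinarith
  · have : (q + 1) * L ≤ p * L := Nat.mul_le_mul_right L h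
    nlinarith

lemma mod_ne_add_one_mod {M : ℕ} (hM : 2 ≤ M) (m : ℕ) : m % M ≠ (m + 1) % M := by
  intro h
  have h01 : 0 ≡ 1 [MOD M] := Nat.ModEq.add_left_cancel' m h
  rw [Nat.ModEq, Nat.zero_mod, Nat.mod_eq_of_lt (by omega)] at h01
  exact zero_ne_one h01

lemma sum_ofReal_mul_mul_conj_sum {κ : Type*} (s s' : Finset κ) (x y : κ → ℝ) (a b : κ → ℂ) :
    (∑ t ∈ s, (x t : ℂ) * a t) * conj (∑ u ∈ s', (y u : ℂ) * b u) =
      ∑ t ∈ s, ∑ u ∈ s', ((x t * y u : ℝ) : ℂ) * (a t * conj (b u)) := by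
  rw [map_sum, sum_mul_sum]
  refine sum_congr rfl fun t _ => sum_congr rfl fun u _ => ?_
  rw [map_mul, conj_ofReal, ofReal_mul]
  ring

section ConstantPlusCentered

variable {Ω : Type*} [MeasurableSpace Ω] {μ : Measure Ω} {Z W : Ω → ℂ}

lemma MeasureTheory.Integrable.conj (hW : Integrable W μ) : Integrable (fun ω => conj (W ω)) μ :=
  conjCLE.toContinuousLinearMap.integrable_comp hW

lemma const_add_mul_conj_const_add (c z w : ℂ) :
    (c + z) * conj (c + w) = c * conj c + c * conj w + z * conj c + z * conj w := by
  rw [map_add]; ring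

lemma integrable_const_add_mul_conj_const_add [IsFiniteMeasure μ] (c : ℂ) (hZ : Integrable Z μ)
    (hW : Integrable W μ) (hZW : Integrable (fun ω => Z ω * conj (W ω)) μ) :
    Integrable (fun ω => (c + Z ω) * conj (c + W ω)) μ := by
  simp_rw [const_add_mul_conj_const_add]
  exact (((integrable_const _).add (hW.conj.const_mul c)).add (hZ.mul_const _)).add hZW

lemma integral_const_add_mul_conj_const_add [IsProbabilityMeasure μ] (c : ℂ)
    (hZ : Integrable Z μ) (hW : Integrable W μ) (hZW : Integrable (fun ω => Z ω * conj (W ω)) μ)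
    (hZ0 : μ[Z] = 0) (hW0 : μ[W] = 0) (hZW0 : ∫ ω, Z ω * conj (W ω) ∂μ = 0) :
    ∫ ω, (c + Z ω) * conj (c + W ω) ∂μ = c * conj c := by
  have hcc : Integrable (fun _ => c * conj c) μ := integrable_const _
  have hcW : Integrable (fun ω => c * conj (W ω)) μ := hW.conj.const_mul c
  have hZc : Integrable (fun ω => Z ω * conj c) μ := hZ.mul_const _
  simp_rw [const_add_mul_conj_const_add]
  rw [integral_add ((hcc.fun_add hcW).fun_add hZc) hZW, integral_add (hcc.fun_add hcW) hZc,
    integral_add hcc hcW]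
  simp [integral_const_mul, integral_conj, integral_mul_const, hZ0, hW0, hZW0]

end ConstantPlusCentered

lemma integral_inv_mul_sum_re_eq {Ω : Type*} [MeasurableSpace Ω] {μ : Measure Ω} {M : ℕ}
    (hM : M ≠ 0) {F : ℕ → Ω → ℂ} {c : ℂ} (hF : ∀ m, Integrable (F m) μ)
    (hFc : ∀ m, ∫ ω, F m ω ∂μ = c) :
    ∫ ω, (M : ℝ)⁻¹ * ∑ m ∈ range M, (F m ω).re ∂μ = c.re := by
  have hre (m : ℕ) : Integrable (fun ω => (F m ω).re) μ := (hF m).re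
  have hre_c (m : ℕ) : ∫ ω, (F m ω).re ∂μ = c.re := (integral_re (hF m)).trans (by rw [hFc]; rfl)
  rw [integral_const_mul, integral_finsetSum _ fun m _ => hre m]
  simp_rw [hre_c, sum_const, card_range, nsmul_eq_mul]
  field_simp

section CenteredNoise

variable {Ω ι κ : Type*} [MeasurableSpace Ω] {μ : Measure Ω} {n : ι → Ω → ℝ}
  (hint : ∀ i, Integrable (n i) μ) (hmean : ∀ i, μ[n i] = 0)
  (hindep : Pairwise fun i j => IndepFun (n i) (n j) μ)
  (s s' : Finset κ) (g h : κ → ι) (a b : κ → ℂ)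

include hint in
lemma integrable_sum_ofReal_mul : Integrable (fun ω => ∑ t ∈ s, (n (g t) ω : ℂ) * a t) μ :=
  integrable_finsetSum _ fun t _ => (hint (g t)).ofReal.mul_const _

include hint hmean in
lemma integral_sum_ofReal_mul : ∫ ω, ∑ t ∈ s, (n (g t) ω : ℂ) * a t ∂μ = 0 := by
  rw [integral_finsetSum _ fun t _ => (hint (g t)).ofReal.mul_const _]
  refine sum_eq_zero fun t _ => ?_
  rw [integral_mul_const, integral_complex_ofReal, hmean, ofReal_zero, zero_mul]

variable {s s' g h}

include hint hindep in
lemma integrable_sum_ofReal_mul_mul_conj_sum (hgh : ∀ t ∈ s, ∀ u ∈ s', g t ≠ h u) :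
    Integrable (fun ω => (∑ t ∈ s, (n (g t) ω : ℂ) * a t) *
      conj (∑ u ∈ s', (n (h u) ω : ℂ) * b u)) μ := by
  simp_rw [sum_ofReal_mul_mul_conj_sum]
  exact integrable_finsetSum _ fun t ht => integrable_finsetSum _ fun u hu =>
    ((hindep (hgh t ht u hu)).integrable_mul (hint _) (hint _)).ofReal.mul_const _

include hint hmean hindep in
lemma integral_sum_ofReal_mul_mul_conj_sum (hgh : ∀ t ∈ s, ∀ u ∈ s', g t ≠ h u) :
    ∫ ω, (∑ t ∈ s, (n (g t) ω : ℂ) * a t) * conj (∑ u ∈ s', (n (h u) ω : ℂ) * b u) ∂μ = 0 := by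
  simp_rw [sum_ofReal_mul_mul_conj_sum]
  rw [integral_finsetSum _ fun t ht => integrable_finsetSum _ fun u hu =>
    ((hindep (hgh t ht u hu)).integrable_mul (hint _) (hint _)).ofReal.mul_const _]
  refine sum_eq_zero fun t ht => ?_
  rw [integral_finsetSum _ fun u hu =>
    ((hindep (hgh t ht u hu)).integrable_mul (hint _) (hint _)).ofReal.mul_const _]
  refine sum_eq_zero fun u hu => ?_
  rw [integral_mul_const, integral_complex_ofReal,
    (hindep (hgh t ht u hu)).integral_fun_mul_eq_mul_integral (hint _).aestronglyMeasurable
      (hint _).aestronglyMeasurable, hmean, zero_mul, ofReal_zero, zero_mul]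

include hint hindep in
lemma integrable_add_sum_mul_conj_add_sum [IsFiniteMeasure μ]
    (hgh : ∀ t ∈ s, ∀ u ∈ s', g t ≠ h u) (c : ℂ) :
    Integrable (fun ω => (c + ∑ t ∈ s, (n (g t) ω : ℂ) * a t) *
      conj (c + ∑ u ∈ s', (n (h u) ω : ℂ) * b u)) μ :=
  integrable_const_add_mul_conj_const_add c (integrable_sum_ofReal_mul hint _ _ _)
    (integrable_sum_ofReal_mul hint _ _ _)
    (integrable_sum_ofReal_mul_mul_conj_sum hint hindep _ _ hgh)

include hint hmean hindep in
lemma integral_add_sum_mul_conj_add_sum [IsProbabilityMeasure μ]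
    (hgh : ∀ t ∈ s, ∀ u ∈ s', g t ≠ h u) (c : ℂ) :
    ∫ ω, (c + ∑ t ∈ s, (n (g t) ω : ℂ) * a t) * conj (c + ∑ u ∈ s', (n (h u) ω : ℂ) * b u) ∂μ =
      c * conj c :=
  integral_const_add_mul_conj_const_add c (integrable_sum_ofReal_mul hint _ _ _)
    (integrable_sum_ofReal_mul hint _ _ _)
    (integrable_sum_ofReal_mul_mul_conj_sum hint hindep _ _ hgh)
    (integral_sum_ofReal_mul hint hmean _ _ _) (integral_sum_ofReal_mul hint hmean _ _ _)
    (integral_sum_ofReal_mul_mul_conj_sum hint hmean hindep _ _ hgh)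

end CenteredNoise

theorem ccp_unbiased_gaussian_general
    {Ω : Type*} [MeasurableSpace Ω] (μ : Measure Ω) [IsProbabilityMeasure μ]
    (L M : ℕ) (hM : 3 ≤ M)
    (σ : ℝ)
    (f : ℤ)
    (X : ℂ)
    (n : ℕ → Ω → ℝ)
    (hindep : iIndepFun n μ)
    (hgauss : ∀ t, Measure.map (n t) μ = gaussianReal 0 ⟨σ ^ 2, sq_nonneg σ⟩)
    (N : ℕ → Ω → ℂ)
    (hN : ∀ (m : ℕ) (ω : Ω), N m ω =
      (Real.sqrt L : ℂ)⁻¹ * ∑ t ∈ Finset.range L,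
        (n ((m % M) * L + t) ω : ℂ) *
          Complex.exp (-2 * Real.pi * Complex.I * f * t / L))
    (Y : ℕ → Ω → ℂ)
    (hY : ∀ (m : ℕ) (ω : Ω), Y m ω = X + N m ω)
    (Py : Ω → ℝ)
    (hPy : ∀ ω : Ω, Py ω =
      (M : ℝ)⁻¹ * ∑ m ∈ Finset.range M,
        (Y m ω * (starRingEnd ℂ) (Y (m + 1) ω)).re) :
    (∫ ω, Py ω ∂μ) - ‖X‖ ^ 2 = 0 := by
  have hint (i : ℕ) : Integrable (n i) μ := integrable_of_map_eq_gaussianReal (hgauss i)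
  have hmean (i : ℕ) : μ[n i] = 0 := integral_eq_of_map_eq_gaussianReal (hgauss i)
  have hpair : Pairwise fun i j => IndepFun (n i) (n j) μ := fun i j hij => hindep.indepFun hij
  set c : ℕ → ℂ := fun t => (Real.sqrt L : ℂ)⁻¹ * exp (-2 * Real.pi * I * f * t / L)
  have hYc (m : ℕ) : Y m = fun ω => X + ∑ t ∈ range L, (n (m % M * L + t) ω : ℂ) * c t := by
    funext ω
    rw [hY, hN, mul_sum]
    exact congrArg _ (sum_congr rfl fun t _ => mul_left_comm _ _ _)
  have hdisj (m : ℕ) : ∀ s ∈ range L, ∀ t ∈ range L, m % M * L + s ≠ (m + 1) % M * L + t :=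
    fun s hs t ht => mul_add_ne_mul_add_of_ne (mod_ne_add_one_mod (by omega) m)
      (mem_range.mp hs) (mem_range.mp ht)
  have hcross_integrable (m : ℕ) : Integrable (fun ω => Y m ω * conj (Y (m + 1) ω)) μ := by
    simp only [hYc]
    exact integrable_add_sum_mul_conj_add_sum hint hpair c c (hdisj m) X
  have hcross (m : ℕ) : ∫ ω, Y m ω * conj (Y (m + 1) ω) ∂μ = X * conj X := by
    simp only [hYc]
    exact integral_add_sum_mul_conj_add_sum hint hmean hpair c c (hdisj m) X
  rw [sub_eq_zero, integral_congr_ae (.of_forall hPy),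
    integral_inv_mul_sum_re_eq (by omega) hcross_integrable hcross, mul_conj, ofReal_re,
    normSq_eq_norm_sq]

/-- For `M ≥ 3`, the cross-correlation periodogram of an
`L`-periodic signal with additive white Gaussian noise is an unbiased estimator
of the signal's power spectrum: `E[P_y(f)] − |X(f)|² = 0`. -/
theorem ccp_unbiased_gaussian
    {Ω : Type*} [MeasurableSpace Ω] (μ : Measure Ω) [IsProbabilityMeasure μ]
    (L M : ℕ) (hL : 1 ≤ L) (hM : 3 ≤ M)
    (σ : ℝ) (hσ : 0 < σ)
    (f : ℤ) (hf : ¬ (L : ℤ) ∣ f) (hf2 : ¬ (L : ℤ) ∣ 2 * f)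
    (x : ℤ → ℝ) (hper : ∀ t : ℤ, x (t + L) = x t)
    (X : ℂ)
    (hX : X = (Real.sqrt L : ℂ)⁻¹ * ∑ t ∈ Finset.range L,
      (x t : ℂ) * Complex.exp (-2 * Real.pi * Complex.I * f * t / L))
    (n : ℕ → Ω → ℝ)
    (hindep : iIndepFun n μ)
    (hgauss : ∀ t, Measure.map (n t) μ = gaussianReal 0 ⟨σ ^ 2, sq_nonneg σ⟩)
    (N : ℕ → Ω → ℂ)
    (hN : ∀ (m : ℕ) (ω : Ω), N m ω =
      (Real.sqrt L : ℂ)⁻¹ * ∑ t ∈ Finset.range L,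
        (n ((m % M) * L + t) ω : ℂ) *
          Complex.exp (-2 * Real.pi * Complex.I * f * t / L))
    (Y : ℕ → Ω → ℂ)
    (hY : ∀ (m : ℕ) (ω : Ω), Y m ω = X + N m ω)
    (Py : Ω → ℝ)
    (hPy : ∀ ω : Ω, Py ω =
      (M : ℝ)⁻¹ * ∑ m ∈ Finset.range M,
        (Y m ω * (starRingEnd ℂ) (Y (m + 1) ω)).re) :
    (∫ ω, Py ω ∂μ) - ‖X‖ ^ 2 = 0 :=
  ccp_unbiased_gaussian_general μ L M hM σ f X n hindep hgauss N hN Y hY Py hPy
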